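/- arXiv:0912.5413 — 5 statements merged into one kernel-verified Lean document; each statement's English description precedes it below -/
import Mathlib

section
/- A nonconstant polynomial over ℂ_p maps closed balls onto closed balls: for P ∈ ℂ_p[z] nonconstant with P(0)=0 and r ≥ 0, one has P(B•(0,r)) = B•(0, M(r)) where M(r) = maxₖ |aₖ| r^k (P = ∑ aₖ z^k). -/
/-!
The quantity `M(r)` is the Gauss norm of `P` at radius `r`, and `‖P z‖ ≤ M(r)` on the disc is the
ultrametric inequality. Conversely, suppose `0 < ‖w‖ ≤ M(r)` and `P - w` has no zero in the disc.
Over an algebraically closed field `P - w` is a constant times a product of factors `X - z` with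
`r < ‖z‖`; each factor has its constant term strictly dominating its other monomials on the disc,
and by the ultrametric inequality this strict dominance survives products. So `‖w‖`, the norm of the
constant term of `P - w`, exceeds every `‖aₖ‖ rᵏ` (`k ≠ 0`, and `a₀ = 0`), hence exceeds `M(r)`.
-/

open Polynomial Metric

namespace Polynomial

variable {K : Type*} [NormedField K]

def ConstCoeffDominates (r : ℝ) (Q : K[X]) : Prop :=
  ∀ j ≠ 0, ‖Q.coeff j‖ * r ^ j < ‖Q.coeff 0‖

variable {r : ℝ} {P Q : K[X]}

theorem ConstCoeffDominates.coeff_zero_ne_zero (hQ : ConstCoeffDominates r Q) : Q.coeff 0 ≠ 0 := by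
  have h := hQ (Q.natDegree + 1) (Nat.succ_ne_zero _)
  rw [coeff_eq_zero_of_natDegree_lt (Nat.lt_succ_self _), norm_zero, zero_mul] at h
  exact norm_pos_iff.mp h

theorem constCoeffDominates_C {c : K} (hc : c ≠ 0) : ConstCoeffDominates r (C c) := by
  intro j hj
  simpa [coeff_C, hj] using hc

theorem constCoeffDominates_X_sub_C (hr : 0 ≤ r) {z : K} (hz : r < ‖z‖) :
    ConstCoeffDominates r (X - C z) := by
  intro j hj
  rcases j with _ | _ | j
  · exact absurd rfl hj
  · simpa using hz
  · simpa [coeff_X, coeff_C] using hr.trans_lt hz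

theorem ConstCoeffDominates.mul [IsUltrametricDist K] (hr : 0 ≤ r) (hP : ConstCoeffDominates r P)
    (hQ : ConstCoeffDominates r Q) : ConstCoeffDominates r (P * Q) := by
  have hP0 := norm_pos_iff.mpr hP.coeff_zero_ne_zero
  have hQ0 := norm_pos_iff.mpr hQ.coeff_zero_ne_zero
  intro k hk
  obtain ⟨⟨i, j⟩, hij, hle⟩ := IsUltrametricDist.exists_norm_finsetSum_le_of_nonempty
    ⟨(0, k), Finset.HasAntidiagonal.mem_antidiagonal.mpr (zero_add k)⟩ fun x => P.coeff x.1 * Q.coeff x.2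
  rw [Finset.HasAntidiagonal.mem_antidiagonal] at hij
  have hterm : ‖P.coeff i‖ * r ^ i * (‖Q.coeff j‖ * r ^ j) < ‖P.coeff 0‖ * ‖Q.coeff 0‖ := by
    rcases eq_or_ne i 0 with rfl | hi
    · simpa using mul_lt_mul_of_pos_left (hQ j (by omega)) hP0
    rcases eq_or_ne j 0 with rfl | hj
    · simpa using mul_lt_mul_of_pos_right (hP i hi) hQ0
    exact mul_lt_mul'' (hP i hi) (hQ j hj) (by positivity) (by positivity)
  calc ‖(P * Q).coeff k‖ * r ^ k ≤ ‖P.coeff i * Q.coeff j‖ * r ^ k := by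
        rw [coeff_mul]; gcongr
    _ = ‖P.coeff i‖ * r ^ i * (‖Q.coeff j‖ * r ^ j) := by rw [norm_mul, ← hij]; ring
    _ < ‖P.coeff 0‖ * ‖Q.coeff 0‖ := hterm
    _ = ‖(P * Q).coeff 0‖ := by rw [mul_coeff_zero, norm_mul]

theorem constCoeffDominates_of_forall_isRoot [IsUltrametricDist K] [IsAlgClosed K] (hr : 0 ≤ r)
    (hQ : Q ≠ 0) (hroots : ∀ z, Q.IsRoot z → r < ‖z‖) : ConstCoeffDominates r Q := by
  rw [← C_leadingCoeff_mul_prod_multiset_X_sub_C (p := Q) IsAlgClosed.card_roots_eq_natDegree]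
  refine (constCoeffDominates_C (leadingCoeff_ne_zero.mpr hQ)).mul hr
    (Multiset.prod_induction _ _ (fun _ _ h h' => h.mul hr h') (constCoeffDominates_C one_ne_zero) ?_)
  simp only [Multiset.mem_map]
  rintro _ ⟨z, hz, rfl⟩
  exact constCoeffDominates_X_sub_C hr (hroots z (isRoot_of_mem_roots hz))

theorem sSup_range_norm_coeff_mul_pow (P : K[X]) (hr : 0 ≤ r) :
    sSup (Set.range fun k => ‖P.coeff k‖ * r ^ k) =
      P.gaussNorm (SeminormedRing.toRingSeminorm K) r := by
  refine IsGreatest.csSup_eq ⟨?_, ?_⟩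
  · obtain ⟨k, hk⟩ := exists_eq_gaussNorm (SeminormedRing.toRingSeminorm K) r P
    exact ⟨k, by simpa using hk.symm⟩
  · rintro _ ⟨k, rfl⟩
    simpa using le_gaussNorm (SeminormedRing.toRingSeminorm K) P hr k

theorem norm_eval_le_gaussNorm [IsUltrametricDist K] (P : K[X]) (hr : 0 ≤ r) {z : K}
    (hz : ‖z‖ ≤ r) : ‖P.eval z‖ ≤ P.gaussNorm (SeminormedRing.toRingSeminorm K) r := by
  rw [eval_eq_sum_range]
  refine IsUltrametricDist.norm_sum_le_of_forall_le_of_nonneg (gaussNorm_nonneg _ P hr)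
    fun i _ => ?_
  calc ‖P.coeff i * z ^ i‖ = ‖P.coeff i‖ * ‖z‖ ^ i := by rw [norm_mul, norm_pow]
    _ ≤ ‖P.coeff i‖ * r ^ i := by gcongr
    _ ≤ P.gaussNorm (SeminormedRing.toRingSeminorm K) r := by
      simpa using le_gaussNorm (SeminormedRing.toRingSeminorm K) P hr i

theorem exists_eval_eq_of_norm_le_gaussNorm [IsUltrametricDist K] [IsAlgClosed K] (hr : 0 ≤ r)
    (h0 : P.coeff 0 = 0) {w : K} (hw : ‖w‖ ≤ P.gaussNorm (SeminormedRing.toRingSeminorm K) r) :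
    ∃ z, ‖z‖ ≤ r ∧ P.eval z = w := by
  rcases eq_or_ne w 0 with rfl | hw0
  · exact ⟨0, by simpa using hr, by rw [← coeff_zero_eq_eval_zero, h0]⟩
  by_contra! hnone
  have hdom : ConstCoeffDominates r (P - C w) := by
    refine constCoeffDominates_of_forall_isRoot hr (fun h => hw0 ?_) fun z hz => ?_
    · simpa [h0] using congrArg (coeff · 0) h
    · by_contra! hzr
      exact hnone z hzr (sub_eq_zero.mp (by simpa using hz.eq_zero))
  obtain ⟨k, hk⟩ := exists_eq_gaussNorm (SeminormedRing.toRingSeminorm K) r P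
  have hlt : ‖P.coeff k‖ * r ^ k < ‖w‖ := by
    rcases eq_or_ne k 0 with rfl | hk0
    · simpa [h0] using hw0
    · simpa [coeff_C, hk0, h0] using hdom k hk0
  exact (hw.trans_eq hk).not_gt (by simpa using hlt)

end Polynomial

theorem polynomial_image_closedBall_general
    {K : Type*} [NontriviallyNormedField K] [IsUltrametricDist K]
    [IsAlgClosed K]
    (P : Polynomial K) (h0 : P.eval 0 = 0)
    (r : ℝ) (hr : 0 ≤ r) :
    (fun z => P.eval z) '' closedBall (0 : K) r =
      closedBall (0 : K) (sSup (Set.range fun k => ‖P.coeff k‖ * r ^ k)) := by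
  rw [sSup_range_norm_coeff_mul_pow P hr]
  ext w
  simp only [Set.mem_image, mem_closedBall_zero_iff]
  constructor
  · rintro ⟨z, hz, rfl⟩
    exact P.norm_eval_le_gaussNorm hr hz
  · intro hw
    exact exists_eval_eq_of_norm_le_gaussNorm hr (by rwa [coeff_zero_eq_eval_zero]) hw

/-- A nonconstant polynomial `P` over `ℂ_p` with `P(0) = 0` maps the closed ball
`B•(0,r)` onto the closed ball `B•(0, M(r))`, where `M(r) = max_k ‖aₖ‖ r^k`. -/
theorem polynomial_image_closedBall
    {K : Type*} [NontriviallyNormedField K] [IsUltrametricDist K]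
    [CompleteSpace K] [IsAlgClosed K]
    (P : Polynomial K) (hP : 0 < P.natDegree) (h0 : P.eval 0 = 0)
    (r : ℝ) (hr : 0 ≤ r) :
    (fun z => P.eval z) '' closedBall (0 : K) r =
      closedBall (0 : K) (sSup (Set.range fun k => ‖P.coeff k‖ * r ^ k)) :=
  polynomial_image_closedBall_general P h0 r hr
end

section
/- Let P ∈ ℂ_p[z] and let B be a closed ball in ℂ_p such that P(B) strictly contains B. Then P has a fixed point in B. -/
open Polynomial Metric Set

/-!
The polynomial `Q = P - X` has no root in `B = closedBall a r`, otherwise `P` has a fixed point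
there. Over an algebraically closed ultrametric field `Q` splits, and for every root `ρ` outside
`B` the distance `‖z - ρ‖` does not depend on `z ∈ B`; hence `‖Q‖` is constant on `B`. Since
`a = P z₀` for some `z₀ ∈ B`, that constant is `‖a - z₀‖ ≤ r`, so `‖P z - z‖ ≤ r` on `B`, and
the ultrametric inequality gives `P(B) ⊆ B`, contradicting strictness.
-/

namespace IsUltrametricDist

lemma dist_eq_dist_of_mem_closedBall_of_notMem {X : Type*} [PseudoMetricSpace X]
    [IsUltrametricDist X] {a x y z : X} {r : ℝ} (hx : x ∈ closedBall a r)
    (hy : y ∈ closedBall a r) (hz : z ∉ closedBall a r) : dist x z = dist y z := by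
  rw [closedBall_eq_of_mem hy] at hx hz
  have hxy : dist x y < dist y z := (mem_closedBall.1 hx).trans_lt <| by
    simpa [dist_comm] using hz
  rw [dist_eq_max_of_dist_ne_dist x y z hxy.ne, max_eq_right hxy.le]

end IsUltrametricDist

namespace Polynomial

lemma norm_eval_eq_of_roots_notMem_closedBall {K : Type*} [NormedField K]
    [IsUltrametricDist K] {Q : K[X]} (hQ : Q.Splits) {a z w : K} {r : ℝ}
    (hroots : ∀ ρ ∈ Q.roots, ρ ∉ closedBall a r) (hz : z ∈ closedBall a r)
    (hw : w ∈ closedBall a r) : ‖Q.eval z‖ = ‖Q.eval w‖ := by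
  rw [hQ.eval_eq_prod_roots, hQ.eval_eq_prod_roots, norm_mul, norm_mul]
  congr 1
  rw [← normHom_apply, ← normHom_apply, map_multiset_prod, map_multiset_prod, Multiset.map_map,
    Multiset.map_map]
  congr 1
  refine Multiset.map_congr rfl fun ρ hρ => ?_
  simpa only [Function.comp_apply, normHom_apply, ← dist_eq_norm] using
    IsUltrametricDist.dist_eq_dist_of_mem_closedBall_of_notMem hz hw (hroots ρ hρ)

end Polynomial

theorem fixed_point_of_image_ssuperset_general
    {K : Type*} [NontriviallyNormedField K] [IsUltrametricDist K]
    [IsAlgClosed K]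
    (P : Polynomial K) (a : K) (r : ℝ) (hr : 0 ≤ r)
    (h : closedBall a r ⊂ (fun z => P.eval z) '' closedBall a r) :
    ∃ z ∈ closedBall a r, P.eval z = z := by
  by_contra! hfix
  obtain ⟨z₀, hz₀, hPz₀⟩ := h.subset (mem_closedBall_self hr)
  have hroots : ∀ ρ ∈ (P - X).roots, ρ ∉ closedBall a r := fun ρ hρ hρB =>
    hfix ρ hρB <| by simpa [sub_eq_zero] using isRoot_of_mem_roots hρ
  have hmaps : MapsTo (fun z => P.eval z) (closedBall a r) (closedBall a r) := by
    intro z hz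
    have hdisp : dist (P.eval z) z ≤ r := calc
      dist (P.eval z) z = ‖(P - X).eval z₀‖ := by
        simpa [dist_eq_norm] using
          norm_eval_eq_of_roots_notMem_closedBall (IsAlgClosed.splits _) hroots hz hz₀
      _ = dist z₀ a := by simp [hPz₀, dist_eq_norm']
      _ ≤ r := hz₀
    rw [IsUltrametricDist.closedBall_eq_of_mem hz]
    exact hdisp
  exact h.2 hmaps.image_subset

/-- If a polynomial `P` over `ℂ_p` maps a closed ball `B` onto a set strictly
containing `B`, then `P` has a fixed point in `B`. -/
theorem fixed_point_of_image_ssuperset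
    {K : Type*} [NontriviallyNormedField K] [IsUltrametricDist K]
    [CompleteSpace K] [IsAlgClosed K]
    (P : Polynomial K) (a : K) (r : ℝ) (hr : 0 ≤ r)
    (h : closedBall a r ⊂ (fun z => P.eval z) '' closedBall a r) :
    ∃ z ∈ closedBall a r, P.eval z = z :=
  fixed_point_of_image_ssuperset_general P a r hr h
end

section
/- Every rational map R ∈ ℂ_p(z) of degree d ≥ 2 has a fixed point in P¹(ℂ_p) that is attracting or indifferent, i.e. some fixed point z₀ with |R'(z₀)| ≤ 1. -/
/-!
With `R = P/Q`, the affine fixed points are the roots of `F = P - X * Q`, and at such a root `z`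
the multiplier is `λ = 1 + F'(z)/Q(z)`, i.e. `Q(z)/F'(z) = 1/(λ - 1)`. If every affine fixed
point is repelling, the ultrametric inequality gives `‖F'(z)‖ > ‖Q(z)‖`, so the roots of `F` are
simple and every term of the partial-fraction identity `∑_{F(z) = 0} Q(z)/F'(z) = lc Q / lc F`
has norm `< 1`. If `∞` is repelling too, then `deg F = deg Q + 1` and `‖lc F‖ = ‖lc Q‖`, so the
right-hand side has norm `1`.
-/

open Polynomial Finset

lemma IsUltrametricDist.norm_sum_lt_of_forall_norm_lt {ι M : Type*} [SeminormedAddCommGroup M]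
    [IsUltrametricDist M] {s : Finset ι} (hs : s.Nonempty) {f : ι → M} {r : ℝ}
    (h : ∀ i ∈ s, ‖f i‖ < r) : ‖∑ i ∈ s, f i‖ < r :=
  (hs.norm_sum_le_sup'_norm f).trans_lt ((Finset.sup'_lt_iff hs).mpr h)

lemma IsUltrametricDist.norm_lt_of_norm_lt_norm_add {M : Type*} [SeminormedAddCommGroup M]
    [IsUltrametricDist M] {x y : M} (h : ‖x‖ < ‖x + y‖) : ‖x‖ < ‖y‖ := by
  by_contra! hyx
  exact (norm_add_le_max x y).not_gt (by rwa [max_eq_left hyx])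

namespace Polynomial

lemma nodup_roots_of_forall_eval_derivative_ne_zero {R : Type*} [CommRing R] [IsDomain R]
    {F : R[X]} (h : ∀ z ∈ F.roots, F.derivative.eval z ≠ 0) : F.roots.Nodup := by
  rcases eq_or_ne F 0 with rfl | hF0
  · simp
  classical
  refine Multiset.nodup_iff_count_le_one.mpr fun z => ?_
  rw [count_roots]
  by_contra! hmult
  obtain ⟨hroot, hroot'⟩ := (one_lt_rootMultiplicity_iff_isRoot hF0).mp hmult
  exact h z ((mem_roots hF0).mpr hroot) hroot'

theorem Splits.sum_roots_eval_div_eval_derivative {K : Type*} [Field K] [DecidableEq K]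
    {F Q : K[X]} (hF : F.Splits) (hnodup : F.roots.Nodup) (hQ : Q.degree < F.natDegree) :
    ∑ z ∈ F.roots.toFinset, Q.eval z / F.derivative.eval z
      = Q.coeff (F.natDegree - 1) / F.leadingCoeff := by
  set s := F.roots.toFinset
  have hs : s.val = F.roots := Multiset.toFinset_val F.roots ▸ hnodup.dedup
  have hcard : #s = F.natDegree := by rw [card_def, hs, hF.natDegree_eq_card_roots]
  have hF_eq : F = C F.leadingCoeff * Lagrange.nodal s id := by
    rw [Lagrange.nodal_eq, prod_eq_multiset_prod, hs]
    exact hF.eq_prod_roots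
  have hderiv : ∀ z ∈ s,
      F.derivative.eval z = (∏ j ∈ s.erase z, (z - j)) * F.leadingCoeff := by
    intro z hz
    rw [hF_eq, derivative_C_mul, eval_mul, eval_C, ← id_eq z,
      Lagrange.eval_nodal_derivative_eval_node_eq hz, Lagrange.eval_nodal, mul_comm, ← hF_eq]
    rfl
  rw [← hcard, Lagrange.coeff_eq_sum Function.injective_id.injOn (hcard ▸ hQ), sum_div]
  exact sum_congr rfl fun z hz => by rw [hderiv z hz, div_div]; rfl

end Polynomial

section FixedPoints

variable {K : Type*}

/-- The derivative of `P/Q` at `z`; at a fixed point of `P/Q` it is the multiplier. -/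
noncomputable def multiplier [Field K] (P Q : K[X]) (z : K) : K :=
  (P.derivative.eval z * Q.eval z - P.eval z * Q.derivative.eval z) / (Q.eval z) ^ 2

lemma multiplier_eq_one_add_div [Field K] {P Q : K[X]} {z : K} (hQz : Q.eval z ≠ 0)
    (hfix : P.eval z = z * Q.eval z) :
    multiplier P Q z = 1 + (P - X * Q).derivative.eval z / Q.eval z := by
  simp only [multiplier, derivative_sub, derivative_mul, derivative_X, eval_sub, eval_add,
    eval_mul, eval_X, eval_one, hfix]
  field_simp
  ring

variable [NormedField K] {P Q : K[X]}

lemma natDegree_le_and_norm_coeff_lt_of_not_nonrepelling_infty (hQ0 : Q ≠ 0)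
    (h : ¬(Q.natDegree < P.natDegree ∧
      (Q.natDegree + 2 ≤ P.natDegree ∨ ‖Q.leadingCoeff / P.leadingCoeff‖ ≤ 1))) :
    P.natDegree ≤ Q.natDegree + 1 ∧ ‖P.coeff (Q.natDegree + 1)‖ < ‖Q.leadingCoeff‖ := by
  push Not at h
  rcases lt_or_ge Q.natDegree P.natDegree with hlt | hle
  · obtain ⟨hdeg, hnorm⟩ := h hlt
    have hP : P.natDegree = Q.natDegree + 1 := by omega
    have hP0 : P ≠ 0 := ne_zero_of_natDegree_gt hlt
    refine ⟨hP.le, ?_⟩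
    rwa [← hP, coeff_natDegree, ← one_lt_div (norm_pos_iff.mpr (leadingCoeff_ne_zero.mpr hP0)),
      ← norm_div]
  · refine ⟨by omega, ?_⟩
    rw [coeff_eq_zero_of_natDegree_lt (by omega), norm_zero]
    exact norm_pos_iff.mpr (leadingCoeff_ne_zero.mpr hQ0)

variable [IsUltrametricDist K]

lemma norm_eval_lt_norm_eval_derivative_of_one_lt_norm_multiplier (hcop : IsCoprime P Q)
    {z : K} (hz : (P - X * Q).IsRoot z)
    (hrep : Q.eval z ≠ 0 → P.eval z = z * Q.eval z → 1 < ‖multiplier P Q z‖) :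
    ‖Q.eval z‖ < ‖(P - X * Q).derivative.eval z‖ := by
  have hfix : P.eval z = z * Q.eval z := sub_eq_zero.mp (by simpa using hz)
  have hQz : Q.eval z ≠ 0 := by
    intro hQz
    rcases aeval_ne_zero_of_isCoprime hcop z with hP | hQ <;> simp_all
  have hlt : ‖(1 : K)‖ < ‖1 + (P - X * Q).derivative.eval z / Q.eval z‖ := by
    rw [norm_one, ← multiplier_eq_one_add_div hQz hfix]
    exact hrep hQz hfix
  have := IsUltrametricDist.norm_lt_of_norm_lt_norm_add hlt
  rwa [norm_one, norm_div, one_lt_div (norm_pos_iff.mpr hQz)] at this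

lemma natDegree_sub_X_mul_and_norm_leadingCoeff (hPdeg : P.natDegree ≤ Q.natDegree + 1)
    (hPcoeff : ‖P.coeff (Q.natDegree + 1)‖ < ‖Q.leadingCoeff‖) :
    (P - X * Q).natDegree = Q.natDegree + 1 ∧ ‖(P - X * Q).leadingCoeff‖ = ‖Q.leadingCoeff‖ := by
  have hcoeff : ‖(P - X * Q).coeff (Q.natDegree + 1)‖ = ‖Q.leadingCoeff‖ := by
    rw [coeff_sub, coeff_X_mul, coeff_natDegree, sub_eq_add_neg,
      IsUltrametricDist.norm_add_eq_max_of_norm_ne_norm (by rw [norm_neg]; exact hPcoeff.ne),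
      norm_neg, max_eq_right hPcoeff.le]
  have hXQ : (X * Q).natDegree ≤ Q.natDegree + 1 :=
    natDegree_mul_le.trans (by rw [natDegree_X, add_comm])
  have hdeg : (P - X * Q).natDegree = Q.natDegree + 1 := by
    refine le_antisymm ((natDegree_sub_le _ _).trans (max_le hPdeg hXQ)) ?_
    refine le_natDegree_of_ne_zero fun h0 => ?_
    rw [h0, norm_zero] at hcoeff
    exact (norm_nonneg _).not_gt (hcoeff ▸ hPcoeff)
  exact ⟨hdeg, by rw [leadingCoeff, hdeg, hcoeff]⟩

end FixedPoints

theorem exists_nonrepelling_fixed_point_general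
    {K : Type*} [NontriviallyNormedField K] [IsUltrametricDist K]
    [IsAlgClosed K]
    (P Q : Polynomial K) (hcop : IsCoprime P Q) (hQ0 : Q ≠ 0) :
    (∃ z₀ : K, Q.eval z₀ ≠ 0 ∧ P.eval z₀ = z₀ * Q.eval z₀ ∧
      ‖(P.derivative.eval z₀ * Q.eval z₀ - P.eval z₀ * Q.derivative.eval z₀)
          / (Q.eval z₀) ^ 2‖ ≤ 1) ∨
    (Q.natDegree < P.natDegree ∧
      (Q.natDegree + 2 ≤ P.natDegree ∨ ‖Q.leadingCoeff / P.leadingCoeff‖ ≤ 1)) := by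
  classical
  refine or_iff_not_imp_right.mpr fun hinfty => ?_
  by_contra! hfinite
  obtain ⟨hPdeg, hPcoeff⟩ := natDegree_le_and_norm_coeff_lt_of_not_nonrepelling_infty hQ0 hinfty
  obtain ⟨hFdeg, hFlc⟩ := natDegree_sub_X_mul_and_norm_leadingCoeff hPdeg hPcoeff
  set F := P - X * Q
  have hroots : ∀ z ∈ F.roots, ‖Q.eval z‖ < ‖F.derivative.eval z‖ := fun z hz =>
    norm_eval_lt_norm_eval_derivative_of_one_lt_norm_multiplier hcop (isRoot_of_mem_roots hz)
      (hfinite z)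
  have hnodup : F.roots.Nodup := nodup_roots_of_forall_eval_derivative_ne_zero fun z hz =>
    norm_pos_iff.mp ((norm_nonneg _).trans_lt (hroots z hz))
  have hQdeg : Q.degree < F.natDegree := by
    rw [hFdeg]
    exact degree_le_natDegree.trans_lt (WithBot.coe_lt_coe.mpr Q.natDegree.lt_succ_self)
  have hsum := (IsAlgClosed.splits F).sum_roots_eval_div_eval_derivative hnodup hQdeg
  rw [hFdeg, Nat.add_sub_cancel, coeff_natDegree] at hsum
  have hsum_norm : ‖∑ z ∈ F.roots.toFinset, Q.eval z / F.derivative.eval z‖ = 1 := by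
    rw [hsum, norm_div, hFlc, div_self (norm_ne_zero_iff.mpr (leadingCoeff_ne_zero.mpr hQ0))]
  have hne : F.roots.toFinset.Nonempty := by
    rw [← card_pos, Multiset.toFinset_card_of_nodup hnodup,
      ← (IsAlgClosed.splits F).natDegree_eq_card_roots, hFdeg]
    exact Nat.succ_pos _
  refine hsum_norm.not_lt (IsUltrametricDist.norm_sum_lt_of_forall_norm_lt hne fun z hz => ?_)
  have hz := hroots z (Multiset.mem_toFinset.mp hz)
  rwa [norm_div, div_lt_one ((norm_nonneg _).trans_lt hz)]

/-- (Benedetto) Every rational map `R = P/Q` of degree `d ≥ 2` over `ℂ_p` has a fixed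
point in `P¹(ℂ_p)` which is attracting or indifferent, i.e. whose multiplier has norm
`≤ 1`. Either this fixed point is an affine point `z₀` (with `Q(z₀) ≠ 0`,
`R(z₀) = z₀` and `‖R'(z₀)‖ ≤ 1`), or it is the point `∞`: `∞` is fixed exactly when
`deg P > deg Q`, it is superattracting when `deg P ≥ deg Q + 2`, and when
`deg P = deg Q + 1` its multiplier is the ratio `lc(Q)/lc(P)` of leading
coefficients. -/
theorem exists_nonrepelling_fixed_point
    {K : Type*} [NontriviallyNormedField K] [IsUltrametricDist K]
    [CompleteSpace K] [IsAlgClosed K] [CharZero K]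
    (P Q : Polynomial K) (hcop : IsCoprime P Q) (hQ0 : Q ≠ 0)
    (hdeg : 2 ≤ max P.natDegree Q.natDegree) :
    (∃ z₀ : K, Q.eval z₀ ≠ 0 ∧ P.eval z₀ = z₀ * Q.eval z₀ ∧
      ‖(P.derivative.eval z₀ * Q.eval z₀ - P.eval z₀ * Q.derivative.eval z₀)
          / (Q.eval z₀) ^ 2‖ ≤ 1) ∨
    (Q.natDegree < P.natDegree ∧
      (Q.natDegree + 2 ≤ P.natDegree ∨ ‖Q.leadingCoeff / P.leadingCoeff‖ ≤ 1)) :=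
  exists_nonrepelling_fixed_point_general P Q hcop hQ0
end

section
/- Under the hypotheses of the ultrametric Schwarz lemma (|aₖ| ≤ c·r^{1−k} for all k ≥ 1), the map f(z) = ∑_{k≥1} aₖ z^k is c-Lipschitz on B°(0,r): |f(z) − f(w)| ≤ c|z − w| for all z, w ∈ B°(0,r). -/
/-!
Write `f(z) - f(w) = ∑ aₖ (z^k - w^k)`, where the constant term cancels. In an ultrametric field the factorisation
`z^k - w^k = (z - w)(z^{k-1} + ⋯ + w^{k-1})` gives `‖z^k - w^k‖ ≤ r^{k-1}‖z - w‖` on `B°(0,r)`,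
so each term is at most `c r^{1-k} · r^{k-1}‖z - w‖ = c‖z - w‖`, and the ultrametric
inequality for series bounds the whole sum by the same constant.
-/

open IsUltrametricDist Finset

lemma norm_pow_sub_pow_le_of_norm_le {K : Type*} [NormedField K] [IsUltrametricDist K]
    {r : ℝ} {z w : K} (hz : ‖z‖ ≤ r) (hw : ‖w‖ ≤ r) (k : ℕ) :
    ‖z ^ k - w ^ k‖ ≤ r ^ (k - 1) * ‖z - w‖ := by
  have hr : 0 ≤ r := (norm_nonneg z).trans hz
  rw [← geom_sum₂_mul, norm_mul]
  gcongr
  refine norm_sum_le_of_forall_le_of_nonneg (by positivity) fun i hi => ?_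
  have hik : i + (k - 1 - i) = k - 1 := by have := mem_range.mp hi; omega
  calc ‖z ^ i * w ^ (k - 1 - i)‖ = ‖z‖ ^ i * ‖w‖ ^ (k - 1 - i) := by
        rw [norm_mul, norm_pow, norm_pow]
    _ ≤ r ^ i * r ^ (k - 1 - i) := by gcongr
    _ = r ^ (k - 1) := by rw [← pow_add, hik]

lemma mul_pow_pred_le_of_le_mul_zpow {r c b : ℝ} (hr : 0 < r) {k : ℕ} (hk : 1 ≤ k)
    (hb : b ≤ c * r ^ (1 - (k : ℤ))) : b * r ^ (k - 1) ≤ c := by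
  have hpow : r ^ (1 - (k : ℤ)) * r ^ (k - 1) = 1 := by
    rw [← zpow_natCast, ← zpow_add₀ hr.ne']
    push_cast [hk]
    simp
  calc b * r ^ (k - 1) ≤ c * r ^ (1 - (k : ℤ)) * r ^ (k - 1) := by gcongr
    _ = c := by rw [mul_assoc, hpow, mul_one]

lemma summable_mul_pow_of_norm_le_mul_zpow {K : Type*} [NormedField K] [CompleteSpace K]
    {a : ℕ → K} {r c : ℝ} (hr : 0 < r) (ha : ∀ k : ℕ, 1 ≤ k → ‖a k‖ ≤ c * r ^ (1 - (k : ℤ)))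
    {u : K} (hu : ‖u‖ < r) : Summable fun k => a k * u ^ k := by
  have hq : ‖u‖ / r < 1 := (div_lt_one hr).mpr hu
  refine (summable_nat_add_iff 1).mp <| Summable.of_norm_bounded
    (((summable_geometric_of_lt_one (by positivity) hq).mul_left c).mul_right ‖u‖) fun k => ?_
  have hcoeff := mul_pow_pred_le_of_le_mul_zpow hr (Nat.le_add_left 1 k) (ha (k + 1) (by omega))
  rw [Nat.add_sub_cancel] at hcoeff
  calc ‖a (k + 1) * u ^ (k + 1)‖ = ‖a (k + 1)‖ * r ^ k * (‖u‖ / r) ^ k * ‖u‖ := by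
        rw [norm_mul, norm_pow, div_pow]
        field_simp
        ring
    _ ≤ c * (‖u‖ / r) ^ k * ‖u‖ := by gcongr

theorem schwarz_lipschitz_general
    {K : Type*} [NontriviallyNormedField K] [IsUltrametricDist K] [CompleteSpace K]
    (a : ℕ → K) (r : ℝ) (hr : 0 < r) (c : ℝ) (hc : 0 ≤ c)
    (ha : ∀ k : ℕ, 1 ≤ k → ‖a k‖ ≤ c * r ^ (1 - (k : ℤ)))
    (z w : K) (hz : ‖z‖ < r) (hw : ‖w‖ < r) :
    ‖(∑' k, a k * z ^ k) - ∑' k, a k * w ^ k‖ ≤ c * ‖z - w‖ := by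
  rw [← (summable_mul_pow_of_norm_le_mul_zpow hr ha hz).tsum_sub
    (summable_mul_pow_of_norm_le_mul_zpow hr ha hw)]
  refine norm_tsum_le_of_forall_le_of_nonneg (by positivity) fun k => ?_
  rw [← mul_sub, norm_mul]
  rcases Nat.eq_zero_or_pos k with rfl | hk
  · simp only [pow_zero, sub_self, norm_zero, mul_zero]
    positivity
  calc ‖a k‖ * ‖z ^ k - w ^ k‖ ≤ ‖a k‖ * (r ^ (k - 1) * ‖z - w‖) := by
        gcongr; exact norm_pow_sub_pow_le_of_norm_le hz.le hw.le k
    _ = ‖a k‖ * r ^ (k - 1) * ‖z - w‖ := by ring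
    _ ≤ c * ‖z - w‖ := by gcongr; exact mul_pow_pred_le_of_le_mul_zpow hr hk (ha k hk)

/-- Under the hypotheses of the ultrametric Schwarz lemma (`‖aₖ‖ ≤ c·r^(1−k)` for
`k ≥ 1`), the map `f(z) = ∑_{k≥1} aₖ z^k` is `c`-Lipschitz on `B°(0,r)`. -/
theorem schwarz_lipschitz
    {K : Type*} [NontriviallyNormedField K] [IsUltrametricDist K] [CompleteSpace K]
    (a : ℕ → K) (ha0 : a 0 = 0) (r : ℝ) (hr : 0 < r) (c : ℝ) (hc : 0 ≤ c)
    (ha : ∀ k : ℕ, 1 ≤ k → ‖a k‖ ≤ c * r ^ (1 - (k : ℤ)))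
    (z w : K) (hz : ‖z‖ < r) (hw : ‖w‖ < r) :
    ‖(∑' k, a k * z ^ k) - ∑' k, a k * w ^ k‖ ≤ c * ‖z - w‖ :=
  schwarz_lipschitz_general a r hr c hc ha z w hz hw
end

section
/- A power series f(z) = ∑_{k≥1} aₖ z^k over ℂ_p with |aₖ| ≤ r^{1−k} for all k is an isometry of B°(0,r) if and only if |f'(z)| = 1 for all z ∈ B°(0,r). -/
/-!
Both conditions are equivalent to `‖a 1‖ = 1`. The coefficient bound makes
`f z - f w - a₁ (z - w)` strictly shorter than `z - w` and `f' z - a₁` strictly shorter than `1`,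
and in an ultrametric field adding something strictly shorter does not change the norm.
-/

open IsUltrametricDist

section Ultrametric

lemma norm_tsum_sub_le_of_forall_ne {ι E : Type*} [NormedAddCommGroup E] [IsUltrametricDist E]
    {f : ι → E} (hf : Summable f) (i : ι) {C : ℝ} (hC : 0 ≤ C) (h : ∀ j ≠ i, ‖f j‖ ≤ C) :
    ‖∑' j, f j - f i‖ ≤ C := by
  classical
  rw [hf.tsum_eq_add_tsum_ite i, add_sub_cancel_left]
  refine norm_tsum_le_of_forall_le_of_nonneg hC fun j => ?_
  split_ifs with hj
  · simpa using hC
  · exact h j hj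

variable {K : Type*} [NormedField K] [IsUltrametricDist K]

lemma norm_eq_iff_norm_eq_one_of_norm_sub_mul_lt {u v c : K} (h : ‖u - c * v‖ < ‖v‖) :
    ‖u‖ = ‖v‖ ↔ ‖c‖ = 1 := by
  have hv : 0 < ‖v‖ := (norm_nonneg _).trans_lt h
  have key : ‖u‖ = ‖v‖ ∨ ‖c‖ = 1 → ‖u‖ = ‖c‖ * ‖v‖ := by
    intro huc
    rw [← norm_mul, ← norm_neg (c * v)]
    refine norm_eq_of_add_norm_lt_max ?_
    rw [← sub_eq_add_neg, norm_neg, norm_mul]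
    rcases huc with hu | hc
    · exact h.trans_le (hu ▸ le_max_left _ _)
    · exact h.trans_le (by simp [hc])
  constructor
  · intro hu
    have := key (.inl hu)
    rw [hu] at this
    simpa [hv.ne'] using this.symm
  · intro hc
    simpa [hc] using key (.inr hc)

lemma norm_pow_succ_sub_pow_succ_le (z w : K) (n : ℕ) :
    ‖z ^ (n + 1) - w ^ (n + 1)‖ ≤ max ‖z‖ ‖w‖ ^ n * ‖z - w‖ := by
  rw [← geom_sum₂_mul, norm_mul]
  gcongr
  refine norm_sum_le_of_forall_le_of_nonneg (by positivity) fun i hi => ?_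
  have hi : i ≤ n := Nat.lt_succ_iff.mp (Finset.mem_range.mp hi)
  calc ‖z ^ i * w ^ (n + 1 - 1 - i)‖ ≤ max ‖z‖ ‖w‖ ^ i * max ‖z‖ ‖w‖ ^ (n - i) := by
        rw [norm_mul, norm_pow, norm_pow, Nat.add_sub_cancel]
        gcongr
        exacts [le_max_left _ _, le_max_right _ _]
    _ = max ‖z‖ ‖w‖ ^ n := by rw [← pow_add, Nat.add_sub_cancel' hi]

end Ultrametric

section PowerSeries

variable {K : Type*} [NormedField K] {a : ℕ → K} {r : ℝ}

lemma norm_coeff_succ_mul_pow_le (ha : ∀ k : ℕ, 1 ≤ k → ‖a k‖ ≤ r ^ (1 - (k : ℤ))) (m : ℕ)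
    {s : ℝ} (hs : 0 ≤ s) : ‖a (m + 1)‖ * s ^ m ≤ (s / r) ^ m := by
  have h := ha (m + 1) m.succ_pos
  rw [show (1 : ℤ) - (m + 1 : ℕ) = -m by push_cast; ring, zpow_neg, zpow_natCast] at h
  calc ‖a (m + 1)‖ * s ^ m ≤ (r ^ m)⁻¹ * s ^ m := by gcongr
    _ = (s / r) ^ m := by rw [div_pow, inv_mul_eq_div]

variable [IsUltrametricDist K]

lemma norm_natCast_mul_coeff_mul_pow_le (ha : ∀ k : ℕ, 1 ≤ k → ‖a k‖ ≤ r ^ (1 - (k : ℤ)))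
    (m : ℕ) (z : K) : ‖((m + 1 : ℕ) : K) * a (m + 1) * z ^ (m + 1 - 1)‖ ≤ (‖z‖ / r) ^ m := by
  calc ‖((m + 1 : ℕ) : K) * a (m + 1) * z ^ (m + 1 - 1)‖ ≤ 1 * ‖a (m + 1)‖ * ‖z‖ ^ m := by
        rw [norm_mul, norm_mul, norm_pow, Nat.add_sub_cancel]
        gcongr
        exact norm_natCast_le_one K _
    _ ≤ (‖z‖ / r) ^ m := by rw [one_mul]; exact norm_coeff_succ_mul_pow_le ha m (norm_nonneg z)

variable [CompleteSpace K]

lemma summable_coeff_mul_pow (hr : 0 < r) (ha : ∀ k : ℕ, 1 ≤ k → ‖a k‖ ≤ r ^ (1 - (k : ℤ)))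
    {z : K} (hz : ‖z‖ < r) : Summable fun k => a k * z ^ k := by
  rw [← summable_nat_add_iff 1]
  refine .of_norm_bounded
    ((summable_geometric_of_lt_one (by positivity) ((div_lt_one hr).2 hz)).mul_right ‖z‖)
    fun m => ?_
  calc ‖a (m + 1) * z ^ (m + 1)‖ = ‖a (m + 1)‖ * ‖z‖ ^ m * ‖z‖ := by
        rw [norm_mul, norm_pow, pow_succ, mul_assoc]
    _ ≤ (‖z‖ / r) ^ m * ‖z‖ := by gcongr; exact norm_coeff_succ_mul_pow_le ha m (norm_nonneg z)

lemma summable_natCast_mul_coeff_mul_pow (hr : 0 < r)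
    (ha : ∀ k : ℕ, 1 ≤ k → ‖a k‖ ≤ r ^ (1 - (k : ℤ))) {z : K} (hz : ‖z‖ < r) :
    Summable fun k : ℕ => (k : K) * a k * z ^ (k - 1) := by
  rw [← summable_nat_add_iff 1]
  exact .of_norm_bounded (summable_geometric_of_lt_one (by positivity) ((div_lt_one hr).2 hz))
    (norm_natCast_mul_coeff_mul_pow_le ha · z)

lemma norm_tsum_sub_tsum_sub_coeff_one_mul_le (hr : 0 < r)
    (ha : ∀ k : ℕ, 1 ≤ k → ‖a k‖ ≤ r ^ (1 - (k : ℤ))) {z w : K} (hz : ‖z‖ < r) (hw : ‖w‖ < r) :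
    ‖(∑' k, a k * z ^ k) - (∑' k, a k * w ^ k) - a 1 * (z - w)‖ ≤
      max ‖z‖ ‖w‖ / r * ‖z - w‖ := by
  set M := max ‖z‖ ‖w‖
  have hM : 0 ≤ M / r := by positivity
  have hMr : M / r ≤ 1 := (div_le_one hr).2 (max_lt hz hw).le
  rw [← (summable_coeff_mul_pow hr ha hz).tsum_sub (summable_coeff_mul_pow hr ha hw),
    show a 1 * (z - w) = a 1 * z ^ 1 - a 1 * w ^ 1 by ring]
  refine norm_tsum_sub_le_of_forall_ne ((summable_coeff_mul_pow hr ha hz).sub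
    (summable_coeff_mul_pow hr ha hw)) 1 (by positivity) fun j hj => ?_
  rcases j with _ | m
  · simpa using by positivity
  have hm : m ≠ 0 := by rintro rfl; exact hj rfl
  calc ‖a (m + 1) * z ^ (m + 1) - a (m + 1) * w ^ (m + 1)‖
      ≤ ‖a (m + 1)‖ * (M ^ m * ‖z - w‖) := by
        rw [← mul_sub, norm_mul]
        gcongr
        exact norm_pow_succ_sub_pow_succ_le z w m
    _ ≤ (M / r) ^ m * ‖z - w‖ := by
        rw [← mul_assoc]
        gcongr
        exact norm_coeff_succ_mul_pow_le ha m (by positivity)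
    _ ≤ M / r * ‖z - w‖ := by gcongr; exact pow_le_of_le_one hM hMr hm

lemma norm_tsum_sub_tsum_sub_coeff_one_mul_lt (hr : 0 < r)
    (ha : ∀ k : ℕ, 1 ≤ k → ‖a k‖ ≤ r ^ (1 - (k : ℤ))) {z w : K} (hz : ‖z‖ < r) (hw : ‖w‖ < r)
    (hzw : z ≠ w) :
    ‖(∑' k, a k * z ^ k) - (∑' k, a k * w ^ k) - a 1 * (z - w)‖ < ‖z - w‖ := by
  refine (norm_tsum_sub_tsum_sub_coeff_one_mul_le hr ha hz hw).trans_lt ?_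
  exact mul_lt_of_lt_one_left (norm_pos_iff.2 (sub_ne_zero.2 hzw))
    ((div_lt_one hr).2 (max_lt hz hw))

lemma norm_tsum_natCast_mul_coeff_mul_pow_sub_coeff_one_lt (hr : 0 < r)
    (ha : ∀ k : ℕ, 1 ≤ k → ‖a k‖ ≤ r ^ (1 - (k : ℤ))) {z : K} (hz : ‖z‖ < r) :
    ‖(∑' k : ℕ, (k : K) * a k * z ^ (k - 1)) - a 1‖ < 1 := by
  have hq : ‖z‖ / r < 1 := (div_lt_one hr).2 hz
  refine lt_of_le_of_lt ?_ hq
  rw [show a 1 = ((1 : ℕ) : K) * a 1 * z ^ (1 - 1) by simp]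
  refine norm_tsum_sub_le_of_forall_ne (summable_natCast_mul_coeff_mul_pow hr ha hz) 1
    (by positivity) fun j hj => ?_
  rcases j with _ | m
  · simpa using by positivity
  have hm : m ≠ 0 := by rintro rfl; exact hj rfl
  calc ‖((m + 1 : ℕ) : K) * a (m + 1) * z ^ (m + 1 - 1)‖ ≤ (‖z‖ / r) ^ m :=
        norm_natCast_mul_coeff_mul_pow_le ha m z
    _ ≤ ‖z‖ / r := pow_le_of_le_one (by positivity) hq.le hm

lemma forall_norm_tsum_natCast_mul_coeff_mul_pow_eq_one_iff (hr : 0 < r)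
    (ha : ∀ k : ℕ, 1 ≤ k → ‖a k‖ ≤ r ^ (1 - (k : ℤ))) :
    (∀ z : K, ‖z‖ < r → ‖∑' k : ℕ, ((k : K) * a k * z ^ (k - 1))‖ = 1) ↔ ‖a 1‖ = 1 := by
  have key {z : K} (hz : ‖z‖ < r) := norm_eq_iff_norm_eq_one_of_norm_sub_mul_lt (v := (1 : K))
    (c := a 1) (by simpa using norm_tsum_natCast_mul_coeff_mul_pow_sub_coeff_one_lt hr ha hz)
  simp only [norm_one] at key
  exact ⟨fun h => (key (by simpa using hr)).1 (h 0 (by simpa using hr)),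
    fun h z hz => (key hz).2 h⟩

end PowerSeries

lemma isometry_iff_norm_coeff_one {K : Type*} [NontriviallyNormedField K] [IsUltrametricDist K]
    [CompleteSpace K] {a : ℕ → K} {r : ℝ} (hr : 0 < r)
    (ha : ∀ k : ℕ, 1 ≤ k → ‖a k‖ ≤ r ^ (1 - (k : ℤ))) :
    (∀ z w : K, ‖z‖ < r → ‖w‖ < r →
        ‖(∑' k, a k * z ^ k) - ∑' k, a k * w ^ k‖ = ‖z - w‖) ↔ ‖a 1‖ = 1 := by
  have key {z w : K} (hz : ‖z‖ < r) (hw : ‖w‖ < r) (hzw : z ≠ w) :=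
    norm_eq_iff_norm_eq_one_of_norm_sub_mul_lt
      (norm_tsum_sub_tsum_sub_coeff_one_mul_lt hr ha hz hw hzw)
  constructor
  · intro hiso
    obtain ⟨x, hx0, hxr⟩ := NormedField.exists_norm_lt K hr
    have h0 : ‖(0 : K)‖ < r := by simpa using hr
    exact (key hxr h0 (norm_pos_iff.1 hx0)).1 (hiso x 0 hxr h0)
  · intro h z w hz hw
    rcases eq_or_ne z w with rfl | hzw
    · simp
    · exact (key hz hw hzw).2 h

theorem isometry_iff_deriv_norm_one_general
    {K : Type*} [NontriviallyNormedField K] [IsUltrametricDist K] [CompleteSpace K]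
    (a : ℕ → K) (r : ℝ) (hr : 0 < r)
    (ha : ∀ k : ℕ, 1 ≤ k → ‖a k‖ ≤ r ^ (1 - (k : ℤ))) :
    (∀ z w : K, ‖z‖ < r → ‖w‖ < r →
        ‖(∑' k, a k * z ^ k) - ∑' k, a k * w ^ k‖ = ‖z - w‖) ↔
      (∀ z : K, ‖z‖ < r → ‖∑' k : ℕ, ((k : K) * a k * z ^ (k - 1))‖ = 1) :=
  (isometry_iff_norm_coeff_one hr ha).trans
    (forall_norm_tsum_natCast_mul_coeff_mul_pow_eq_one_iff hr ha).symm

/-- A power series `f(z) = ∑_{k≥1} aₖ z^k` over `ℂ_p` with `‖aₖ‖ ≤ r^(1−k)` for all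
`k` is an isometry of `B°(0,r)` if and only if `‖f'(z)‖ = 1` for all `z ∈ B°(0,r)`,
where `f'` is the formal derivative `∑_{k≥1} k aₖ z^(k−1)`. -/
theorem isometry_iff_deriv_norm_one
    {K : Type*} [NontriviallyNormedField K] [IsUltrametricDist K] [CompleteSpace K]
    [IsAlgClosed K]
    (hdense : ∀ s t : ℝ, 0 < s → s < t → ∃ x : K, s < ‖x‖ ∧ ‖x‖ < t)
    (a : ℕ → K) (ha0 : a 0 = 0) (r : ℝ) (hr : 0 < r)
    (ha : ∀ k : ℕ, 1 ≤ k → ‖a k‖ ≤ r ^ (1 - (k : ℤ))) :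
    (∀ z w : K, ‖z‖ < r → ‖w‖ < r →
        ‖(∑' k, a k * z ^ k) - ∑' k, a k * w ^ k‖ = ‖z - w‖) ↔
      (∀ z : K, ‖z‖ < r → ‖∑' k : ℕ, ((k : K) * a k * z ^ (k - 1))‖ = 1) :=
  isometry_iff_deriv_norm_one_general a r hr ha
end
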